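/- Let M ∈ ℝ^{d×d} be a symmetric matrix with rank M = 2. Then M can be written as M = a⊙b for some vectors a, b ∈ ℝ^d if and only if M has two eigenvalues of opposite signs, i.e. there exist nonzero vectors v, w ∈ ℝ^d and real numbers λ, μ with Mv = λv, Mw = μw and λμ < 0. -/

import Mathlib

/-!
`a ⊙ b` sends `x` to `((b ⬝ x) a + (a ⬝ x) b) / 2`, so its range lies in `span {a, b}` and
rank two forces `a, b` to be independent. Then `|b| a ± |a| b` are eigenvectors with eigenvalues
`(a ⬝ b ± |a| |b|) / 2`, whose product `((a ⬝ b)² - |a|² |b|²) / 4` is negative by the strict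
Cauchy–Schwarz inequality.

Conversely, eigenvectors `v, w` of the symmetric `M` for eigenvalues `λ > 0 > μ` are orthogonal
and span the two-dimensional range of `M`, so
`M = p² v vᵀ - q² w wᵀ = (p v + q w) ⊙ (p v - q w)` with `p² = λ / |v|²`, `q² = -μ / |w|²`.
-/

/-- The symmetric tensor product `a ⊙ b := (a ⊗ b + b ⊗ a)/2`. -/
noncomputable def symTensor {d : ℕ} (a b : Fin d → ℝ) : Matrix (Fin d) (Fin d) ℝ :=
  (1 / 2 : ℝ) • (Matrix.vecMulVec a b + Matrix.vecMulVec b a)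

open Matrix Module Submodule

section DotProduct

variable {n R : Type*} [Fintype n]

lemma dotProduct_self_pos [Ring R] [LinearOrder R] [IsStrictOrderedRing R] {v : n → R}
    (hv : v ≠ 0) : 0 < v ⬝ᵥ v :=
  (Finset.sum_nonneg fun i _ => mul_self_nonneg (v i)).lt_of_ne
    (Ne.symm (dotProduct_self_eq_zero.not.mpr hv))

lemma mul_self_dotProduct_lt_of_linearIndependent [Field R] [LinearOrder R]
    [IsStrictOrderedRing R] {a b : n → R} (h : LinearIndependent R ![a, b]) :
    (a ⬝ᵥ b) * (a ⬝ᵥ b) < (a ⬝ᵥ a) * (b ⬝ᵥ b) := by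
  have hb : 0 < b ⬝ᵥ b := dotProduct_self_pos (h.ne_zero 1)
  set x := (b ⬝ᵥ b) • a - (a ⬝ᵥ b) • b
  have hx : x ≠ 0 := fun hx =>
    hb.ne' (LinearIndependent.pair_iff.mp h _ (-(a ⬝ᵥ b)) (by rw [← hx]; module)).1
  have hxx : x ⬝ᵥ x = (b ⬝ᵥ b) * ((a ⬝ᵥ a) * (b ⬝ᵥ b) - (a ⬝ᵥ b) * (a ⬝ᵥ b)) := by
    simp only [x, dotProduct_sub, sub_dotProduct, dotProduct_smul, smul_dotProduct, smul_eq_mul,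
      dotProduct_comm b a]
    ring
  have hpos := dotProduct_self_pos hx
  rw [hxx] at hpos
  linarith [pos_of_mul_pos_right hpos hb.le]

lemma linearIndependent_pair_of_dotProduct_eq_zero [Field R] [LinearOrder R]
    [IsStrictOrderedRing R] {v w : n → R} (hv : v ≠ 0) (hw : w ≠ 0) (hvw : v ⬝ᵥ w = 0) :
    LinearIndependent R ![v, w] :=
  (LinearIndependent.pair_iff' hv).mpr fun c hc => hw <| dotProduct_self_eq_zero.mp <|
    calc w ⬝ᵥ w = (c • v) ⬝ᵥ w := by rw [hc]
      _ = 0 := by rw [smul_dotProduct, hvw, smul_zero]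

end DotProduct

namespace Matrix.IsSymm

variable {n R : Type*} [Fintype n]

lemma mulVec_dotProduct [CommSemiring R] {M : Matrix n n R} (hM : M.IsSymm) (x y : n → R) :
    M *ᵥ x ⬝ᵥ y = x ⬝ᵥ M *ᵥ y := by
  rw [dotProduct_mulVec, ← mulVec_transpose, hM.eq]

lemma dotProduct_eq_zero_of_mulVec_eq_smul [CommRing R] [IsDomain R] {M : Matrix n n R}
    (hM : M.IsSymm) {v w : n → R} {lam mu : R} (hv : M *ᵥ v = lam • v)
    (hw : M *ᵥ w = mu • w) (hne : lam ≠ mu) : v ⬝ᵥ w = 0 := by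
  have h := hM.mulVec_dotProduct v w
  rw [hv, hw, smul_dotProduct, dotProduct_smul, smul_eq_mul, smul_eq_mul] at h
  by_contra hvw
  exact hne (mul_right_cancel₀ hvw h)

end Matrix.IsSymm

section SymTensor

variable {d : ℕ}

lemma symTensor_mulVec (a b x : Fin d → ℝ) :
    symTensor a b *ᵥ x = (1 / 2 : ℝ) • ((b ⬝ᵥ x) • a + (a ⬝ᵥ x) • b) := by
  simp [symTensor, add_mulVec, smul_mulVec, vecMulVec_mulVec]

lemma symTensor_add_sub (x y : Fin d → ℝ) :
    symTensor (x + y) (x - y) = vecMulVec x x - vecMulVec y y := by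
  ext i j
  simp only [symTensor, Matrix.smul_apply, Matrix.add_apply, Matrix.sub_apply, vecMulVec_apply,
    Pi.add_apply, Pi.sub_apply, smul_eq_mul]
  ring

lemma smul_vecMulVec_add_smul_vecMulVec_eq_symTensor {α β : ℝ} (hα : 0 ≤ α) (hβ : β ≤ 0)
    (v w : Fin d → ℝ) :
    α • vecMulVec v v + β • vecMulVec w w =
      symTensor (√α • v + √(-β) • w) (√α • v - √(-β) • w) := by
  rw [symTensor_add_sub]
  simp only [smul_vecMulVec, vecMulVec_smul, smul_smul, Real.mul_self_sqrt hα,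
    Real.mul_self_sqrt (neg_nonneg.mpr hβ), neg_smul, sub_neg_eq_add]

lemma range_mulVecLin_symTensor_le (a b : Fin d → ℝ) :
    LinearMap.range (symTensor a b).mulVecLin ≤ span ℝ (Set.range ![a, b]) := by
  rintro _ ⟨x, rfl⟩
  rw [mulVecLin_apply, symTensor_mulVec, range_cons_cons_empty]
  exact smul_mem _ _ (add_mem (smul_mem _ _ (subset_span (by simp)))
    (smul_mem _ _ (subset_span (by simp))))

lemma linearIndependent_of_rank_symTensor_eq_two {a b : Fin d → ℝ}
    (hrank : (symTensor a b).rank = 2) : LinearIndependent ℝ ![a, b] := by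
  refine linearIndependent_iff_card_eq_finrank_span.mpr (le_antisymm ?_ (finrank_range_le_card _))
  calc Fintype.card (Fin 2) = (symTensor a b).rank := hrank.symm
    _ ≤ _ := finrank_mono (range_mulVecLin_symTensor_le a b)

lemma symTensor_mulVec_add_smul {a b : Fin d → ℝ} {s t : ℝ} (hs : s * s = b ⬝ᵥ b)
    (ht : t * t = a ⬝ᵥ a) :
    symTensor a b *ᵥ (s • a + t • b) = ((a ⬝ᵥ b + s * t) / 2) • (s • a + t • b) := by
  rw [symTensor_mulVec]
  simp only [dotProduct_add, dotProduct_smul, smul_eq_mul, dotProduct_comm b a]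
  match_scalars
  · linear_combination (-t / 2) * hs
  · linear_combination (-s / 2) * ht

end SymTensor

lemma exists_eigenvalues_mul_neg_symTensor {d : ℕ} {a b : Fin d → ℝ}
    (h : LinearIndependent ℝ ![a, b]) :
    ∃ (v w : Fin d → ℝ) (lam mu : ℝ), v ≠ 0 ∧ w ≠ 0 ∧
      symTensor a b *ᵥ v = lam • v ∧ symTensor a b *ᵥ w = mu • w ∧ lam * mu < 0 := by
  have hs : √(b ⬝ᵥ b) * √(b ⬝ᵥ b) = b ⬝ᵥ b :=
    Real.mul_self_sqrt (dotProduct_self_pos (h.ne_zero 1)).le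
  have ht : √(a ⬝ᵥ a) * √(a ⬝ᵥ a) = a ⬝ᵥ a :=
    Real.mul_self_sqrt (dotProduct_self_pos (h.ne_zero 0)).le
  have ht' : -√(a ⬝ᵥ a) * -√(a ⬝ᵥ a) = a ⬝ᵥ a := by rw [neg_mul_neg, ht]
  have hs0 : √(b ⬝ᵥ b) ≠ 0 := Real.sqrt_ne_zero'.mpr (dotProduct_self_pos (h.ne_zero 1))
  refine ⟨_, _, _, _, fun h0 => hs0 (LinearIndependent.pair_iff.mp h _ _ h0).1,
    fun h0 => hs0 (LinearIndependent.pair_iff.mp h _ _ h0).1,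
    symTensor_mulVec_add_smul hs ht, symTensor_mulVec_add_smul hs ht', ?_⟩
  have hprod : (a ⬝ᵥ b + √(b ⬝ᵥ b) * √(a ⬝ᵥ a)) / 2 * ((a ⬝ᵥ b + √(b ⬝ᵥ b) * -√(a ⬝ᵥ a)) / 2) =
      ((a ⬝ᵥ b) * (a ⬝ᵥ b) - (a ⬝ᵥ a) * (b ⬝ᵥ b)) / 4 := by
    linear_combination (-(√(a ⬝ᵥ a) * √(a ⬝ᵥ a)) / 4) * hs + (-(b ⬝ᵥ b) / 4) * ht
  rw [hprod]
  linarith [mul_self_dotProduct_lt_of_linearIndependent h]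

section RankTwo

variable {n : Type*} [Fintype n]

lemma range_mulVecLin_eq_span_of_rank_eq_two {K : Type*} [Field K] {M : Matrix n n K}
    (hrank : M.rank = 2) {v w : n → K} {lam mu : K} (hlam : lam ≠ 0) (hmu : mu ≠ 0)
    (hv : M *ᵥ v = lam • v) (hw : M *ᵥ w = mu • w) (hli : LinearIndependent K ![v, w]) :
    LinearMap.range M.mulVecLin = span K (Set.range ![v, w]) := by
  have mem_range {u : n → K} {c : K} (hc : c ≠ 0) (hu : M *ᵥ u = c • u) :
      u ∈ LinearMap.range M.mulVecLin :=
    ⟨c⁻¹ • u, by rw [mulVecLin_apply, mulVec_smul, hu, smul_smul, inv_mul_cancel₀ hc, one_smul]⟩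
  refine (eq_of_le_of_finrank_eq ?_ ?_).symm
  · rw [span_le, range_cons_cons_empty]
    rintro _ (rfl | rfl)
    exacts [mem_range hlam hv, mem_range hmu hw]
  · rw [finrank_span_eq_card hli, Fintype.card_fin]
    exact hrank.symm

lemma Matrix.IsSymm.eq_smul_vecMulVec_add_smul_vecMulVec {M : Matrix n n ℝ} (hM : M.IsSymm)
    {v w : n → ℝ} {lam mu : ℝ} (hrange : LinearMap.range M.mulVecLin ≤ span ℝ (Set.range ![v, w]))
    (hv0 : v ≠ 0) (hw0 : w ≠ 0) (hvw : v ⬝ᵥ w = 0) (hv : M *ᵥ v = lam • v)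
    (hw : M *ᵥ w = mu • w) :
    M = (lam / (v ⬝ᵥ v)) • vecMulVec v v + (mu / (w ⬝ᵥ w)) • vecMulVec w w := by
  set N := M - (lam / (v ⬝ᵥ v)) • vecMulVec v v - (mu / (w ⬝ᵥ w)) • vecMulVec w w with hN
  have hNx (x : n → ℝ) :
      N *ᵥ x = M *ᵥ x - (lam / (v ⬝ᵥ v) * (v ⬝ᵥ x)) • v - (mu / (w ⬝ᵥ w) * (w ⬝ᵥ x)) • w := by
    simp only [N, sub_mulVec, smul_mulVec, vecMulVec_mulVec, op_smul_eq_smul, smul_smul]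
  have hker : span ℝ (Set.range ![v, w]) ≤ LinearMap.ker N.mulVecLin := by
    rw [span_le, range_cons_cons_empty, Set.insert_subset_iff, Set.singleton_subset_iff]
    simp only [SetLike.mem_coe, LinearMap.mem_ker, mulVecLin_apply]
    constructor
    · rw [hNx, hv, dotProduct_comm w v, hvw,
        div_mul_cancel₀ _ (dotProduct_self_pos hv0).ne']
      simp
    · rw [hNx, hw, hvw, div_mul_cancel₀ _ (dotProduct_self_pos hw0).ne']
      simp
  have hNN : N * N = 0 := mulVec_injective <| funext fun x => by
    have hmem : N *ᵥ x ∈ span ℝ (Set.range ![v, w]) := by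
      rw [hNx]
      exact sub_mem (sub_mem (hrange ⟨x, rfl⟩) (smul_mem _ _ (subset_span ⟨0, rfl⟩)))
        (smul_mem _ _ (subset_span ⟨1, rfl⟩))
    rw [← mulVec_mulVec, zero_mulVec]
    exact hker hmem
  have isSymm_vecMulVec_self (u : n → ℝ) : (vecMulVec u u).IsSymm := transpose_vecMulVec u u
  have hNsymm : N.IsSymm :=
    (hM.sub ((isSymm_vecMulVec_self v).smul _)).sub ((isSymm_vecMulVec_self w).smul _)
  have hN0 : N = 0 := conjTranspose_mul_self_eq_zero.mp <| by
    rwa [conjTranspose_eq_transpose_of_trivial, hNsymm.eq]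
  rwa [hN, sub_sub, sub_eq_zero] at hN0

end RankTwo

lemma Matrix.IsSymm.exists_eq_symTensor_of_rank_eq_two {d : ℕ} {M : Matrix (Fin d) (Fin d) ℝ}
    (hM : M.IsSymm) (hrank : M.rank = 2) {v w : Fin d → ℝ} {lam mu : ℝ} (hv0 : v ≠ 0)
    (hw0 : w ≠ 0) (hv : M *ᵥ v = lam • v) (hw : M *ᵥ w = mu • w) (hlam : 0 < lam)
    (hmu : mu < 0) :
    ∃ a b : Fin d → ℝ, M = symTensor a b := by
  have hvw := hM.dotProduct_eq_zero_of_mulVec_eq_smul hv hw (hmu.trans hlam).ne'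
  have hrange := range_mulVecLin_eq_span_of_rank_eq_two hrank hlam.ne' hmu.ne hv hw
    (linearIndependent_pair_of_dotProduct_eq_zero hv0 hw0 hvw)
  rw [hM.eq_smul_vecMulVec_add_smul_vecMulVec hrange.le hv0 hw0 hvw hv hw]
  exact ⟨_, _, smul_vecMulVec_add_smul_vecMulVec_eq_symTensor
    (div_pos hlam (dotProduct_self_pos hv0)).le
    (div_neg_of_neg_of_pos hmu (dotProduct_self_pos hw0)).le v w⟩

/-- A symmetric matrix of rank two can be written as `a ⊙ b` if and only if it has two
(nonzero, real) eigenvalues of opposite signs. -/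
theorem symm_rank_two_symTensor_iff {d : ℕ} (M : Matrix (Fin d) (Fin d) ℝ)
    (hM : M.IsSymm) (hrank : M.rank = 2) :
    (∃ a b : Fin d → ℝ, M = symTensor a b) ↔
      ∃ (v w : Fin d → ℝ) (lam mu : ℝ), v ≠ 0 ∧ w ≠ 0 ∧
        M.mulVec v = lam • v ∧ M.mulVec w = mu • w ∧ lam * mu < 0 := by
  constructor
  · rintro ⟨a, b, rfl⟩
    exact exists_eigenvalues_mul_neg_symTensor (linearIndependent_of_rank_symTensor_eq_two hrank)
  · rintro ⟨v, w, lam, mu, hv0, hw0, hv, hw, hlm⟩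
    rcases mul_neg_iff.mp hlm with ⟨hlam, hmu⟩ | ⟨hlam, hmu⟩
    · exact hM.exists_eq_symTensor_of_rank_eq_two hrank hv0 hw0 hv hw hlam hmu
    · exact hM.exists_eq_symTensor_of_rank_eq_two hrank hw0 hv0 hw hv hmu hlam
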